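/- arXiv:2101.03641 — 4 statements merged into one kernel-verified Lean document; each statement's English description precedes it below -/
import Mathlib

section
/- The function R ↦ 1/(1 + ∑_{j=1}^{∞} (λ/μ)^j · ∏_{k=0}^{j-1} 1/(R+1+k)) is strictly increasing in R over nonnegative integers. -/
private lemma term_nonneg (c : ℝ) (hc : 0 < c) (R j : ℕ) :
    0 ≤ c ^ (j + 1) * ∏ k ∈ Finset.range (j + 1), (1 / ((R : ℝ) + 1 + k)) := by
  apply mul_nonneg (pow_nonneg hc.le _)
  apply Finset.prod_nonneg
  intro k _
  positivity

private lemma fact_eq_prod (j : ℕ) :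
    (Nat.factorial (j + 1) : ℝ) = ∏ k ∈ Finset.range (j + 1), ((k : ℝ) + 1) := by
  induction j with
  | zero => simp
  | succ n ih =>
    rw [Finset.prod_range_succ, ← ih]
    push_cast [Nat.factorial_succ]
    ring

private lemma term_summable (c : ℝ) (hc : 0 < c) (R : ℕ) :
    Summable (fun j : ℕ => c ^ (j + 1) * ∏ k ∈ Finset.range (j + 1), (1 / ((R : ℝ) + 1 + k))) := by
  have hfac : Summable (fun n : ℕ => c ^ (n + 1) / (Nat.factorial (n + 1) : ℝ)) := by
    exact (summable_nat_add_iff 1).mpr (Real.summable_pow_div_factorial c)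
  apply Summable.of_nonneg_of_le (term_nonneg c hc R) _ hfac
  intro j
  rw [div_eq_mul_inv]
  apply mul_le_mul_of_nonneg_left _ (pow_nonneg hc.le _)
  have h1 : (∏ k ∈ Finset.range (j + 1), (1 / ((R : ℝ) + 1 + k)))
      = (∏ k ∈ Finset.range (j + 1), ((R : ℝ) + 1 + k))⁻¹ := by
    rw [← Finset.prod_inv_distrib]
    simp [one_div]
  rw [h1]
  have h2 : (Nat.factorial (j + 1) : ℝ) ≤ ∏ k ∈ Finset.range (j + 1), ((R : ℝ) + 1 + k) := by
    rw [fact_eq_prod j]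
    apply Finset.prod_le_prod
    · intro k _; positivity
    · intro k _
      have : (0:ℝ) ≤ (R:ℝ) := Nat.cast_nonneg R
      linarith
  apply inv_anti₀ _ h2
  positivity

/-- The total stationary passive probability mass
q^R(R') = 1/(1 + ∑_{j≥1} (λ/μ)^j ∏_{k=0}^{j-1} 1/(R+1+k)) is strictly increasing in R. -/
theorem stmt_2 (lam mu : ℝ) (hlam : 0 < lam) (hmu : 0 < mu) :
    StrictMono (fun R : ℕ =>
      1 / (1 + ∑' j : ℕ,
        (lam / mu) ^ (j + 1) * ∏ k ∈ Finset.range (j + 1), (1 / ((R : ℝ) + 1 + k)))) := by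
  set c := lam / mu with hcdef
  have hc : 0 < c := div_pos hlam hmu
  apply strictMono_nat_of_lt_succ
  intro R
  set S : ℕ → ℝ := fun R => ∑' j : ℕ,
      c ^ (j + 1) * ∏ k ∈ Finset.range (j + 1), (1 / ((R : ℝ) + 1 + k)) with hS
  have hSnn : ∀ R, 0 ≤ S R := fun R => tsum_nonneg (term_nonneg c hc R)
  have hlt : S (R + 1) < S R := by
    apply Summable.tsum_lt_tsum (i := 0) _ _ (term_summable c hc (R + 1)) (term_summable c hc R)
    · intro j
      apply mul_le_mul_of_nonneg_left _ (pow_nonneg hc.le _)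
      apply Finset.prod_le_prod
      · intro k _; positivity
      · intro k _
        apply one_div_le_one_div_of_le
        · positivity
        · push_cast; linarith
    · have e : ∀ r : ℕ, (∏ k ∈ Finset.range (0 + 1), (1 / ((r : ℝ) + 1 + k))) = 1 / (r + 1) := by
        intro r; simp
      rw [e, e]
      apply mul_lt_mul_of_pos_left _ (pow_pos hc _)
      apply one_div_lt_one_div_of_lt
      · positivity
      · push_cast; linarith
  have h1 : 0 < 1 + S (R + 1) := by linarith [hSnn (R + 1)]
  have := one_div_lt_one_div_of_lt h1 (by linarith : 1 + S (R + 1) < 1 + S R)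
  convert this using 3 <;> push_cast <;> ring
end

section
/- Let h^R(W) = c(R) − W·p(R) where p : ℕ → [0,1] is strictly increasing. If W₁ < W₂ and the minimizers R(W₁) of h^·(W₁) and R(W₂) of h^·(W₂) over R are unique, then R(W₂) ≥ R(W₁); that is, the minimizing threshold is monotone in W. -/
/-- Monotonicity of minimizing thresholds: with h^R(W) = c(R) − W·p(R) and p strictly
increasing, unique minimizers at subsidies W₁ < W₂ satisfy R₁ ≤ R₂. -/
theorem stmt_4 (c p : ℕ → ℝ) (hp_mono : StrictMono p) (hp01 : ∀ R, p R ∈ Set.Icc (0 : ℝ) 1)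
    (W₁ W₂ : ℝ) (hW : W₁ < W₂) (R₁ R₂ : ℕ)
    (hmin₁ : ∀ R, c R₁ - W₁ * p R₁ ≤ c R - W₁ * p R)
    (hmin₂ : ∀ R, c R₂ - W₂ * p R₂ ≤ c R - W₂ * p R)
    (huniq₁ : ∀ R, (∀ R', c R - W₁ * p R ≤ c R' - W₁ * p R') → R = R₁)
    (huniq₂ : ∀ R, (∀ R', c R - W₂ * p R ≤ c R' - W₂ * p R') → R = R₂) :
    R₁ ≤ R₂ := by
  have h1 := hmin₁ R₂
  have h2 := hmin₂ R₁
  have hp : p R₁ ≤ p R₂ := by nlinarith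
  exact hp_mono.le_iff_le.mp hp
end

section
/- Let p_j := e^{−ρ} ρ^j / j! be Poisson(ρ) probabilities and let q^R be the Poisson(ρ) distribution conditioned on {j ≥ R}, i.e. q^R(j) = p_j / ∑_{i ≥ R} p_i for j ≥ R. Then the conditional mean E[X | X ≥ R] = ∑_{j ≥ R} j·q^R(j) is strictly increasing in R. -/
/-- The conditional mean E[X | X ≥ R] of a Poisson(ρ) random variable is strictly
increasing in R. -/
theorem stmt_15 (ρ : ℝ) (hρ : 0 < ρ) :
    StrictMono (fun R : ℕ =>
      ∑' j : ℕ, ((j + R : ℕ) : ℝ) *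
        ((Real.exp (-ρ) * ρ ^ (j + R) / ((j + R).factorial : ℝ)) /
          ∑' i : ℕ, Real.exp (-ρ) * ρ ^ (i + R) / ((i + R).factorial : ℝ))) := by
  set p : ℕ → ℝ := fun j => Real.exp (-ρ) * ρ ^ j / (j.factorial : ℝ) with hp_def
  have hppos : ∀ j, 0 < p j := by
    intro j
    have : (0:ℝ) < (j.factorial : ℝ) := by positivity
    simp only [hp_def]
    positivity
  have hsp : Summable p := by
    have := (Real.summable_pow_div_factorial ρ).mul_left (Real.exp (-ρ))
    simpa [hp_def, mul_div_assoc] using this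
  have hsm : Summable (fun j : ℕ => (j : ℝ) * p j) := by
    rw [← summable_nat_add_iff 1]
    refine ((Real.summable_pow_div_factorial ρ).mul_left (Real.exp (-ρ) * ρ)).congr fun n => ?_
    have h1 : ((n+1).factorial : ℝ) = ((n:ℝ)+1) * (n.factorial : ℝ) := by
      push_cast [Nat.factorial_succ]; ring
    have h2 : (n.factorial : ℝ) ≠ 0 := Nat.cast_ne_zero.mpr n.factorial_ne_zero
    have h3 : ((n:ℝ)+1) ≠ 0 := by positivity
    simp only [hp_def]
    push_cast
    rw [h1]
    field_simp
    ring
  have hspR : ∀ R, Summable (fun j : ℕ => p (j + R)) := fun R => (summable_nat_add_iff R).2 hsp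
  have hsmR : ∀ R, Summable (fun j : ℕ => ((j + R : ℕ) : ℝ) * p (j + R)) := by
    intro R
    have := (summable_nat_add_iff (f := fun j : ℕ => (j : ℝ) * p j) R).2 hsm
    simpa using this
  set T : ℕ → ℝ := fun R => ∑' i : ℕ, p (i + R) with hT_def
  set M : ℕ → ℝ := fun R => ∑' j : ℕ, ((j + R : ℕ) : ℝ) * p (j + R) with hM_def
  have hTpos : ∀ R, 0 < T R := by
    intro R
    exact Summable.tsum_pos (hspR R) (fun i => (hppos _).le) 0 (hppos (0 + R))
  have hTrec : ∀ R, T R = p R + T (R + 1) := by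
    intro R
    simp only [hT_def]
    rw [Summable.tsum_eq_zero_add (hspR R)]
    congr 1
    · simp
    · apply tsum_congr; intro n; congr 1; omega
  have hMrec : ∀ R, M R = (R : ℝ) * p R + M (R + 1) := by
    intro R
    simp only [hM_def]
    rw [Summable.tsum_eq_zero_add (hsmR R)]
    congr 1
    · simp
    · apply tsum_congr; intro n
      have : n + 1 + R = n + (R + 1) := by omega
      rw [this]
  have hMge : ∀ R : ℕ, ((R : ℝ) + 1) * T (R + 1) ≤ M (R + 1) := by
    intro R
    simp only [hT_def, hM_def]
    rw [← tsum_mul_left]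
    refine Summable.tsum_le_tsum (fun j => ?_) ((hspR (R+1)).mul_left _) (hsmR (R+1))
    have hj : ((R:ℝ) + 1) ≤ ((j + (R+1) : ℕ) : ℝ) := by
      push_cast
      have : (0:ℝ) ≤ (j:ℝ) := Nat.cast_nonneg j
      linarith
    exact mul_le_mul_of_nonneg_right hj (hppos _).le
  have hfun : ∀ R, (∑' j : ℕ, ((j + R : ℕ) : ℝ) * (p (j + R) / T R)) = M R / T R := by
    intro R
    rw [hM_def, ← tsum_div_const]
    apply tsum_congr; intro j; ring
  apply strictMono_nat_of_lt_succ
  intro R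
  show (∑' j : ℕ, ((j + R : ℕ) : ℝ) * (p (j + R) / T R)) <
      ∑' j : ℕ, ((j + (R + 1) : ℕ) : ℝ) * (p (j + (R + 1)) / T (R + 1))
  rw [hfun R, hfun (R + 1)]
  rw [div_lt_div_iff₀ (hTpos R) (hTpos (R + 1))]
  have h1 := hTrec R
  have h2 := hMrec R
  have h3 := hMge R
  have h4 := hTpos (R + 1)
  have h5 := hppos R
  rw [h1, h2]
  nlinarith [mul_pos h4 h5, mul_le_mul_of_nonneg_right h3 h5.le]
end

section
/- Let X₁, X₂, ... be i.i.d. exponential(λ) and let x̄_n = (1/n)∑_{ℓ=1}^{n} X_ℓ. For δ ∈ (0,1), ε ∈ (0,1), τ_h ≥ (−log ε)/λ, and deviation radius r_n = √(2 τ_h² log(1/δ) / n), we have P(x̄_n − 1/λ > r_n) ≤ δ + n·ε. -/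
/-! Truncate every sample at `τ`. Off the event that some `X i` exceeds `τ`, which has probability
at most `n e^{-λτ} ≤ n ε`, the sum of the samples equals the sum of the truncations `min (X i) τ`.
These are independent, take values in `[0, τ]` and have mean at most `1/λ`, so Hoeffding's
inequality bounds the probability that their sum exceeds `n/λ + n r_n` by
`exp (-2 n r_n² / τ²) = δ⁴ ≤ δ`. -/

open MeasureTheory ProbabilityTheory Real Set

namespace ProbabilityTheory

lemma expMeasure_eq_withDensity (r : ℝ) :
    expMeasure r = volume.withDensity (exponentialPDF r) := rfl

lemma measurable_exponentialPDF (r : ℝ) : Measurable (exponentialPDF r) :=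
  (measurable_exponentialPDFReal r).ennreal_ofReal

lemma ae_nonneg_expMeasure (r : ℝ) : ∀ᵐ x ∂expMeasure r, 0 ≤ x := by
  rw [expMeasure_eq_withDensity, ae_withDensity_iff (measurable_exponentialPDF r)]
  refine ae_of_all _ fun x hx => ?_
  by_contra! hneg
  exact hx (exponentialPDF_of_neg hneg)

lemma integral_id_expMeasure {r : ℝ} (hr : 0 < r) : ∫ x, x ∂expMeasure r = 1 / r := by
  rw [expMeasure_eq_withDensity, integral_withDensity_eq_integral_toReal_smul
    (measurable_exponentialPDF r) (ae_of_all _ fun _ => ENNReal.ofReal_lt_top)]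
  have hΓ := integral_rpow_mul_exp_neg_mul_Ioi (a := 2) two_pos hr
  norm_num at hΓ
  calc ∫ x, (exponentialPDF r x).toReal • x
      = ∫ x in Ioi 0, r * (x * exp (-(r * x))) := by
        rw [← integral_indicator measurableSet_Ioi]
        congr 1 with x
        rcases lt_or_ge 0 x with hx | hx
        · rw [exponentialPDF_of_nonneg hx.le, ENNReal.toReal_ofReal (by positivity),
            indicator_of_mem (mem_Ioi.2 hx), smul_eq_mul]
          ring
        · rcases hx.lt_or_eq with hx | rfl
          · simp [exponentialPDF_of_neg hx, hx.not_gt]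
          · simp
    _ = 1 / r := by rw [integral_const_mul, hΓ]; field_simp

lemma integrable_id_expMeasure {r : ℝ} (hr : 0 < r) : Integrable (fun x => x) (expMeasure r) :=
  .of_integral_ne_zero (by rw [integral_id_expMeasure hr]; positivity)

lemma integral_min_expMeasure_le {r : ℝ} (hr : 0 < r) (τ : ℝ) :
    ∫ x, min x τ ∂expMeasure r ≤ 1 / r := by
  have := isProbabilityMeasure_expMeasure hr
  rw [← integral_id_expMeasure hr]
  exact integral_mono ((integrable_id_expMeasure hr).inf (integrable_const τ))
    (integrable_id_expMeasure hr) fun x => min_le_left x τ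

lemma expMeasure_Ioi {r τ : ℝ} (hr : 0 < r) (hτ : 0 ≤ τ) :
    expMeasure r (Ioi τ) = ENNReal.ofReal (exp (-(r * τ))) := by
  have := isProbabilityMeasure_expMeasure hr
  rw [← compl_Iic, prob_compl_eq_one_sub measurableSet_Iic, ← ofReal_cdf, cdf_expMeasure_eq hr,
    if_pos hτ, ENNReal.ofReal_sub _ (exp_pos _).le, ENNReal.ofReal_one,
    ENNReal.sub_sub_cancel ENNReal.one_ne_top]
  exact ENNReal.ofReal_le_one.2 (exp_le_one_iff.2 (by nlinarith))

section MapEqExpMeasure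

variable {Ω : Type*} [MeasurableSpace Ω] {μ : Measure Ω} {Y : Ω → ℝ} {r : ℝ}

lemma ae_nonneg_of_map_eq_expMeasure (hY : Measurable Y) (hmap : μ.map Y = expMeasure r) :
    ∀ᵐ ω ∂μ, 0 ≤ Y ω :=
  ae_of_ae_map hY.aemeasurable (hmap ▸ ae_nonneg_expMeasure r)

lemma integral_min_le_of_map_eq_expMeasure (hr : 0 < r) (hY : Measurable Y)
    (hmap : μ.map Y = expMeasure r) (τ : ℝ) : ∫ ω, min (Y ω) τ ∂μ ≤ 1 / r := by
  rw [← integral_map (f := fun x => min x τ) hY.aemeasurable (by fun_prop), hmap]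
  exact integral_min_expMeasure_le hr τ

lemma measure_lt_of_map_eq_expMeasure (hr : 0 < r) (hY : Measurable Y)
    (hmap : μ.map Y = expMeasure r) {τ : ℝ} (hτ : 0 ≤ τ) :
    μ {ω | τ < Y ω} = ENNReal.ofReal (exp (-(r * τ))) := by
  rw [← expMeasure_Ioi hr hτ, ← hmap, Measure.map_apply hY measurableSet_Ioi]
  rfl

end MapEqExpMeasure

section Hoeffding

variable {Ω ι : Type*} [MeasurableSpace Ω] {μ : Measure Ω} [IsProbabilityMeasure μ] [Fintype ι]

lemma measureReal_sum_sub_integral_ge_le_of_mem_Icc {Y : ι → Ω → ℝ}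
    (hm : ∀ i, AEMeasurable (Y i) μ) (hindep : iIndepFun Y μ) {a b : ℝ}
    (hY : ∀ i, ∀ᵐ ω ∂μ, Y i ω ∈ Icc a b) {t : ℝ} (ht : 0 ≤ t) :
    μ.real {ω | t ≤ ∑ i, (Y i ω - μ[Y i])} ≤
      exp (-2 * t ^ 2 / (Fintype.card ι * (b - a) ^ 2)) := by
  have hcentered : iIndepFun (fun i ω => Y i ω - μ[Y i]) μ :=
    hindep.comp (fun i y => y - ∫ ω, Y i ω ∂μ) fun _ => measurable_id.sub_const _
  refine (HasSubgaussianMGF.measure_sum_ge_le_of_iIndepFun hcentered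
    (fun i _ => hasSubgaussianMGF_of_mem_Icc (hm i) (hY i)) ht).trans_eq ?_
  congr 1
  simp only [Finset.sum_const, Finset.card_univ, nsmul_eq_mul]
  push_cast
  rw [Real.norm_eq_abs, div_pow, sq_abs]
  generalize (b - a) ^ 2 = w
  ring

lemma measure_sum_ge_le_of_truncation {X : ι → Ω → ℝ} (hm : ∀ i, AEMeasurable (X i) μ)
    (hindep : iIndepFun X μ) (hX : ∀ i, ∀ᵐ ω ∂μ, 0 ≤ X i ω) {τ M t : ℝ} (hτ : 0 ≤ τ)
    (hM : ∀ i, ∫ ω, min (X i ω) τ ∂μ ≤ M) (ht : 0 ≤ t) :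
    μ {ω | Fintype.card ι * M + t ≤ ∑ i, X i ω} ≤
      ∑ i, μ {ω | τ < X i ω} + ENNReal.ofReal (exp (-2 * t ^ 2 / (Fintype.card ι * τ ^ 2))) := by
  set Y : ι → Ω → ℝ := fun i ω => min (X i ω) τ
  have hsubset : {ω | Fintype.card ι * M + t ≤ ∑ i, X i ω} ⊆
      (⋃ i, {ω | τ < X i ω}) ∪ {ω | t ≤ ∑ i, (Y i ω - μ[Y i])} := by
    intro ω hω
    by_cases hbig : ∃ i, τ < X i ω
    · exact Or.inl (mem_iUnion.2 hbig)
    push Not at hbig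
    refine Or.inr ?_
    have hY : ∀ i, Y i ω = X i ω := fun i => min_eq_left (hbig i)
    have hsumM : ∑ i, μ[Y i] ≤ Fintype.card ι * M := by
      simpa using Finset.sum_le_sum fun i (_ : i ∈ Finset.univ) => hM i
    simp only [mem_ofPred_eq, Finset.sum_sub_distrib, hY] at hω ⊢
    linarith
  have hYm : ∀ i, AEMeasurable (Y i) μ := fun i => (hm i).min aemeasurable_const
  have hYindep : iIndepFun Y μ := hindep.comp (fun _ x => min x τ) fun _ => by fun_prop
  have hYbound : ∀ i, ∀ᵐ ω ∂μ, Y i ω ∈ Icc 0 τ := fun i => by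
    filter_upwards [hX i] with ω hω using ⟨le_min hω hτ, min_le_right _ _⟩
  have hhoeffding := measureReal_sum_sub_integral_ge_le_of_mem_Icc hYm hYindep hYbound ht
  rw [sub_zero] at hhoeffding
  calc μ {ω | Fintype.card ι * M + t ≤ ∑ i, X i ω}
      ≤ μ (⋃ i, {ω | τ < X i ω}) + μ {ω | t ≤ ∑ i, (Y i ω - μ[Y i])} :=
        (measure_mono hsubset).trans (measure_union_le _ _)
    _ ≤ _ := by
        gcongr
        · exact measure_iUnion_fintype_le _ _
        · rw [← ofReal_measureReal]
          exact ENNReal.ofReal_le_ofReal hhoeffding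

end Hoeffding

end ProbabilityTheory

lemma exp_neg_two_mul_sq_sqrt_log_le {n τ δ : ℝ} (hn : 0 < n) (hτ : 0 < τ) (hδ0 : 0 < δ)
    (hδ1 : δ ≤ 1) :
    exp (-2 * (n * √(2 * τ ^ 2 * log (1 / δ) / n)) ^ 2 / (n * τ ^ 2)) ≤ δ := by
  have hL : 0 ≤ log (1 / δ) := log_nonneg (one_le_one_div hδ0 hδ1)
  have hexponent : -2 * (n * √(2 * τ ^ 2 * log (1 / δ) / n)) ^ 2 / (n * τ ^ 2) =
      -4 * log (1 / δ) := by
    rw [mul_pow, sq_sqrt (by positivity)]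
    field_simp
    ring
  calc _ ≤ exp (-log (1 / δ)) := by
        rw [hexponent]
        gcongr
        linarith
    _ = δ := by rw [one_div, log_inv, neg_neg, exp_log hδ0]

/-- Confidence-radius concentration for the empirical mean of i.i.d. exponential(λ)
variables: with r_n = √(2 τ_h² log(1/δ)/n), P(x̄_n − 1/λ > r_n) ≤ δ + n·ε. -/
theorem stmt_17 {Ω : Type*} [MeasurableSpace Ω] (μ : Measure Ω) [IsProbabilityMeasure μ]
    (lam : ℝ) (hlam : 0 < lam) (n : ℕ) (hn : 0 < n) (X : Fin n → Ω → ℝ)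
    (hmeas : ∀ i, Measurable (X i))
    (hindep : iIndepFun X μ)
    (hdist : ∀ i, Measure.map (X i) μ = expMeasure lam)
    (δ : ℝ) (hδ : δ ∈ Set.Ioo (0 : ℝ) 1) (ε : ℝ) (hε : ε ∈ Set.Ioo (0 : ℝ) 1)
    (τ : ℝ) (hτ : (-Real.log ε) / lam ≤ τ) :
    μ {ω | (∑ i, X i ω) / n - 1 / lam >
        Real.sqrt (2 * τ ^ 2 * Real.log (1 / δ) / n)} ≤
      ENNReal.ofReal (δ + n * ε) := by
  obtain ⟨hδ0, hδ1⟩ := hδ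
  obtain ⟨hε0, hε1⟩ := hε
  have hn' : (0 : ℝ) < n := Nat.cast_pos.2 hn
  have hτ0 : 0 < τ := (div_pos (neg_pos.2 (log_neg hε0 hε1)) hlam).trans_le hτ
  set r := √(2 * τ ^ 2 * log (1 / δ) / n)
  have htail : ∀ i, μ {ω | τ < X i ω} ≤ ENNReal.ofReal ε := fun i => by
    rw [measure_lt_of_map_eq_expMeasure hlam (hmeas i) (hdist i) hτ0.le, ← exp_log hε0]
    gcongr
    linarith [(div_le_iff₀ hlam).1 hτ]
  have hsubset : {ω | (∑ i, X i ω) / n - 1 / lam > r} ⊆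
      {ω | n * (1 / lam) + n * r ≤ ∑ i, X i ω} := fun ω hω => by
    have := (lt_div_iff₀ hn').1 (lt_sub_iff_add_lt.1 hω)
    simp only [mem_ofPred_eq]
    linarith
  calc μ {ω | (∑ i, X i ω) / n - 1 / lam > r}
      ≤ μ {ω | n * (1 / lam) + n * r ≤ ∑ i, X i ω} := measure_mono hsubset
    _ ≤ ∑ i, μ {ω | τ < X i ω} + ENNReal.ofReal (exp (-2 * (n * r) ^ 2 / (n * τ ^ 2))) := by
      simpa using measure_sum_ge_le_of_truncation (fun i => (hmeas i).aemeasurable) hindep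
        (fun i => ae_nonneg_of_map_eq_expMeasure (hmeas i) (hdist i)) hτ0.le
        (fun i => integral_min_le_of_map_eq_expMeasure hlam (hmeas i) (hdist i) τ)
        (t := n * r) (by positivity)
    _ ≤ ∑ _i : Fin n, ENNReal.ofReal ε + ENNReal.ofReal δ := by
      gcongr with i
      · exact htail i
      · exact exp_neg_two_mul_sq_sqrt_log_le hn' hτ0 hδ0 hδ1.le
    _ = ENNReal.ofReal (δ + n * ε) := by
      rw [ENNReal.ofReal_add hδ0.le (by positivity), ENNReal.ofReal_mul hn'.le,
        ENNReal.ofReal_natCast, Finset.sum_const, Finset.card_univ, Fintype.card_fin,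
        nsmul_eq_mul, add_comm]
end
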